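/- arXiv:2407.08863 — 3 statements merged into one kernel-verified Lean document; each statement's English description precedes it below -/
import Mathlib

section
/- Let A > 0, 0 < a < 1, ε > 0 and define the Aliev–Panfilov nonlinearities f(u,w) = Au(u−a)(u−1) + uw and g(u,w) = ε(Au(u−1−a) + w). Let w̄ ≥ A(1+a)²/4. Then for all z ∈ [0, w̄] and all u ∈ [0, 1+a]: f(0,z) = 0 (so f(0,z) ≤ 0), f(1+a, z) ≥ 0 whenever z ≥ 0, g(u, 0) ≤ 0, and g(u, w̄) ≥ 0. Consequently the constants (ū, w̄) = (1+a, w̄) and (u̲, w̲) = (0, 0) satisfy the defining inequalities of generalized coupled upper and lower solutions for the Aliev–Panfilov model. -/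
/-- **Aliev–Panfilov constant upper/lower solutions.**
With `f(u,w) = A u (u-a)(u-1) + u w`, `g(u,w) = ε (A u (u-1-a) + w)`, `A > 0`,
`0 < a < 1`, `ε > 0` and `w̄ ≥ A(1+a)²/4`, the constants `(ū,w̄) = (1+a, w̄)` and
`(u̲,w̲) = (0,0)` satisfy the defining inequalities of generalized coupled
upper and lower solutions: for all `z ∈ [0,w̄]` and `u ∈ [0,1+a]`,
`f(0,z) = 0` (hence `f(0,z) ≤ 0`), `f(1+a,z) ≥ 0`, `g(u,0) ≤ 0` and `g(u,w̄) ≥ 0`. -/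
theorem alievPanfilov_constant_upper_lower_solutions
    (A a ε wbar : ℝ) (hA : 0 < A) (ha0 : 0 < a) (ha1 : a < 1) (hε : 0 < ε)
    (hwbar : A * (1 + a) ^ 2 / 4 ≤ wbar)
    (f g : ℝ → ℝ → ℝ)
    (hf : ∀ u w, f u w = A * u * (u - a) * (u - 1) + u * w)
    (hg : ∀ u w, g u w = ε * (A * u * (u - 1 - a) + w)) :
    (∀ z ∈ Set.Icc (0 : ℝ) wbar,
        f 0 z = 0 ∧ f 0 z ≤ 0 ∧ 0 ≤ f (1 + a) z) ∧
    (∀ u ∈ Set.Icc (0 : ℝ) (1 + a),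
        g u 0 ≤ 0 ∧ 0 ≤ g u wbar) := by
  constructor
  · intro z hz
    obtain ⟨hz0, hzw⟩ := hz
    refine ⟨by rw [hf]; ring, by rw [hf]; nlinarith, ?_⟩
    rw [hf]
    nlinarith [mul_pos hA ha0, mul_nonneg (le_of_lt ha0) hz0]
  · intro u hu
    obtain ⟨hu0, hu1⟩ := hu
    constructor
    · rw [hg]
      have h1 : u - 1 - a ≤ 0 := by linarith
      have : A * u * (u - 1 - a) + 0 ≤ 0 := by
        have := mul_nonpos_of_nonneg_of_nonpos (mul_nonneg hA.le hu0) h1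
        linarith
      nlinarith
    · rw [hg]
      have h : A * u * (u - 1 - a) + wbar ≥ 0 := by
        nlinarith [mul_nonneg hA.le (sq_nonneg (2 * u - (1 + a)))]
      nlinarith
end

section
/- Let A > 0, 0 < a < 1, ε > 0, γ > 0 and let f(u,w) = Au(u−a)(u−1) + w, g(u,w) = ε(γw − u) be the FitzHugh–Nagumo nonlinearities. Define m_a = − min_{a ≤ u ≤ 1} u(u−a)(u−1). Then m_a > 0, and if γA > 1/m_a there exist constants 0 < u̲ < ū and 0 = w̲ < w̄ forming generalized coupled lower and upper solutions: namely, taking u̲ ∈ (a,1) a point where u(u−a)(u−1) attains its minimum −m_a, w̄ = A m_a, and any ū with 1 < ū ≤ γ A m_a, one has f(u̲, w) ≤ 0 for all w ∈ [0, w̄], f(ū, w) ≥ 0 for all w ∈ [0, w̄], g(u, 0) ≤ 0 for all u ∈ [u̲, ū], and g(u, w̄) ≥ 0 for all u ∈ [u̲, ū]. -/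
/-! The cubic `u (u - a) (u - 1)` vanishes at `a` and `1` and is negative in between, so its
minimum `-m_a` over `[a, 1]` is negative and attained in `(a, 1)`. With `w̄ = A m_a` and
`ū ≤ γ w̄`, the four inequalities are then sign checks. -/

open Set

theorem exists_mem_Ioo_sInf_image_eq_of_neg {φ : ℝ → ℝ} {a b : ℝ}
    (hφ : ContinuousOn φ (Icc a b)) (ha : 0 ≤ φ a) (hb : 0 ≤ φ b)
    (hneg : ∃ u ∈ Icc a b, φ u < 0) :
    ∃ x ∈ Ioo a b, sInf (φ '' Icc a b) = φ x ∧ φ x < 0 := by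
  obtain ⟨u, hu, hφu⟩ := hneg
  obtain ⟨x, hx, hx_eq⟩ := isCompact_Icc.exists_sInf_image_eq ⟨u, hu⟩ hφ
  have hφx : φ x < 0 :=
    hx_eq ▸ (csInf_le (isCompact_Icc.image_of_continuousOn hφ).bddBelow ⟨u, hu, rfl⟩).trans_lt hφu
  have hxa : x ≠ a := by rintro rfl; linarith
  have hxb : x ≠ b := by rintro rfl; linarith
  exact ⟨x, ⟨hx.1.lt_of_ne' hxa, hx.2.lt_of_ne hxb⟩, hx_eq, hφx⟩

theorem cubic_neg_of_mem_Ioo {a u : ℝ} (ha : 0 ≤ a) (hu : u ∈ Ioo a 1) :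
    u * (u - a) * (u - 1) < 0 :=
  mul_neg_of_pos_of_neg (mul_pos (by linarith [hu.1]) (by linarith [hu.1])) (by linarith [hu.2])

theorem cubic_pos_of_one_lt {a u : ℝ} (ha : a < 1) (hu : 1 < u) :
    0 < u * (u - a) * (u - 1) :=
  mul_pos (mul_pos (by linarith) (by linarith)) (by linarith)

theorem exists_mem_Ioo_sInf_image_cubic_eq {a : ℝ} (ha0 : 0 < a) (ha1 : a < 1) :
    ∃ x ∈ Ioo a 1, sInf ((fun u : ℝ => u * (u - a) * (u - 1)) '' Icc a 1)
      = x * (x - a) * (x - 1) ∧ x * (x - a) * (x - 1) < 0 := by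
  have hmid : (a + 1) / 2 ∈ Ioo a 1 := ⟨by linarith, by linarith⟩
  exact exists_mem_Ioo_sInf_image_eq_of_neg (by fun_prop) (by simp) (by simp)
    ⟨(a + 1) / 2, Ioo_subset_Icc_self hmid, cubic_neg_of_mem_Ioo ha0.le hmid⟩

theorem fitzHughNagumo_positive_constant_upper_lower_solutions_general
    (A a ε γ ma : ℝ) (hA : 0 < A) (ha0 : 0 < a) (ha1 : a < 1)
    (hε : 0 < ε)
    (hma : ma = -sInf ((fun u : ℝ => u * (u - a) * (u - 1)) '' Set.Icc a 1))
    (f g : ℝ → ℝ → ℝ)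
    (hf : ∀ u w, f u w = A * u * (u - a) * (u - 1) + w)
    (hg : ∀ u w, g u w = ε * (γ * w - u)) :
    0 < ma ∧
    (∃ ul ∈ Set.Ioo a 1, ul * (ul - a) * (ul - 1) = -ma) ∧
    (1 / ma < γ * A →
      ∀ ul ∈ Set.Ioo a 1, ul * (ul - a) * (ul - 1) = -ma →
      ∀ ub : ℝ, 1 < ub → ub ≤ γ * A * ma →
        (∀ w ∈ Set.Icc (0 : ℝ) (A * ma), f ul w ≤ 0) ∧
        (∀ w ∈ Set.Icc (0 : ℝ) (A * ma), 0 ≤ f ub w) ∧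
        (∀ u ∈ Set.Icc ul ub, g u 0 ≤ 0) ∧
        (∀ u ∈ Set.Icc ul ub, 0 ≤ g u (A * ma))) := by
  obtain ⟨x, hx, hx_eq, hx_neg⟩ := exists_mem_Ioo_sInf_image_cubic_eq ha0 ha1
  refine ⟨by linarith, ⟨x, hx, by linarith⟩, fun _ ul hul hul_eq ub hub hub_le => ?_⟩
  refine ⟨fun w hw => ?_, fun w hw => ?_, fun u hu => ?_, fun u hu => ?_⟩
  · rw [hf, mul_assoc, mul_assoc, ← mul_assoc ul, hul_eq]
    linarith [hw.2]
  · rw [hf, mul_assoc, mul_assoc, ← mul_assoc ub]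
    nlinarith [cubic_pos_of_one_lt ha1 hub, hw.1]
  · rw [hg]
    nlinarith [hul.1, hu.1]
  · rw [hg]
    nlinarith [hu.2]

/-- **Positive constant upper/lower solutions for FitzHugh–Nagumo when `γA` is large.**
With `f(u,w) = A u(u-a)(u-1) + w`, `g(u,w) = ε(γw - u)` and
`m_a = - min_{a ≤ u ≤ 1} u(u-a)(u-1)`, one has `m_a > 0`; the minimum is attained at
some `u̲ ∈ (a,1)`, and if `γA > 1/m_a` then for any such minimizer `u̲`, for
`w̄ = A m_a` and any `ū` with `1 < ū ≤ γ A m_a`: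
`f(u̲,w) ≤ 0` and `f(ū,w) ≥ 0` for all `w ∈ [0,w̄]`, and `g(u,0) ≤ 0`, `g(u,w̄) ≥ 0`
for all `u ∈ [u̲,ū]`, i.e. the constants form generalized coupled lower and upper
solutions. -/
theorem fitzHughNagumo_positive_constant_upper_lower_solutions
    (A a ε γ ma : ℝ) (hA : 0 < A) (ha0 : 0 < a) (ha1 : a < 1)
    (hε : 0 < ε) (hγ : 0 < γ)
    (hma : ma = -sInf ((fun u : ℝ => u * (u - a) * (u - 1)) '' Set.Icc a 1))
    (f g : ℝ → ℝ → ℝ)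
    (hf : ∀ u w, f u w = A * u * (u - a) * (u - 1) + w)
    (hg : ∀ u w, g u w = ε * (γ * w - u)) :
    0 < ma ∧
    (∃ ul ∈ Set.Ioo a 1, ul * (ul - a) * (ul - 1) = -ma) ∧
    (1 / ma < γ * A →
      ∀ ul ∈ Set.Ioo a 1, ul * (ul - a) * (ul - 1) = -ma →
      ∀ ub : ℝ, 1 < ub → ub ≤ γ * A * ma →
        (∀ w ∈ Set.Icc (0 : ℝ) (A * ma), f ul w ≤ 0) ∧
        (∀ w ∈ Set.Icc (0 : ℝ) (A * ma), 0 ≤ f ub w) ∧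
        (∀ u ∈ Set.Icc ul ub, g u 0 ≤ 0) ∧
        (∀ u ∈ Set.Icc ul ub, 0 ≤ g u (A * ma))) :=
  fitzHughNagumo_positive_constant_upper_lower_solutions_general A a ε γ ma hA ha0 ha1 hε hma f g hf
    hg
end

section
/- Let κ > 0, M₂ > 0, let w₀ be a bounded function on a set E, and let g* : [0,T] × ℝ × ℝ → ℝ satisfy |g*(t,v,w) − g*(t,v',w')| ≤ M₂(|v−v'| + |w−w'|) for all t, v, v', w, w'. For bounded continuous functions v, w on E × [0,T] define G(v,w)(x,t) = e^{−κt} w₀(x) + ∫₀ᵗ e^{−κ(t−τ)} g*(τ, v(x,τ), w(x,τ)) dτ. Then for any two pairs (v,w), (v',w'): sup_{E×[0,T]} |G(v,w) − G(v',w')| ≤ (M₂/κ)( sup_{E×[0,T]} |v − v'| + sup_{E×[0,T]} |w − w'| ). -/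
/-! The two images share the term `e^{-κt} w₀`, so their difference is the convolution of the
kernel `e^{-κ(t-τ)}` with `g*(τ, v, w) - g*(τ, v', w')`, which the Lipschitz bound makes at most
`M₂ (Kv + Kw)` in absolute value. Since the kernel has total mass `(1 - e^{-κt})/κ ≤ 1/κ`
on `[0, t]`, the estimate follows. -/

open Real intervalIntegral
open MeasureTheory (volume)

theorem integral_exp_neg_mul_sub (κ t : ℝ) (hκ : κ ≠ 0) :
    ∫ τ in (0 : ℝ)..t, exp (-κ * (t - τ)) = (1 - exp (-κ * t)) / κ := by
  have hderiv (τ : ℝ) :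
      HasDerivAt (fun τ => exp (-κ * (t - τ)) / κ) (exp (-κ * (t - τ))) τ :=
    ((((hasDerivAt_id' τ).const_sub t).const_mul (-κ)).exp.div_const κ).congr_deriv
      (by field_simp)
  rw [integral_eq_sub_of_hasDerivAt (fun τ _ => hderiv τ)
    ((by fun_prop : Continuous fun τ => exp (-κ * (t - τ))).intervalIntegrable _ _)]
  simp [sub_div]

theorem integral_exp_neg_mul_sub_le_inv (t : ℝ) {κ : ℝ} (hκ : 0 < κ) :
    ∫ τ in (0 : ℝ)..t, exp (-κ * (t - τ)) ≤ κ⁻¹ := by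
  rw [integral_exp_neg_mul_sub κ t hκ.ne', div_eq_mul_inv]
  exact mul_le_of_le_one_left (inv_nonneg.2 hκ.le) (sub_le_self _ (exp_pos _).le)

theorem abs_integral_exp_neg_mul_sub_mul_le {h : ℝ → ℝ} {κ t C : ℝ} (hκ : 0 < κ) (ht : 0 ≤ t)
    (hC : ∀ τ ∈ Set.Icc 0 t, |h τ| ≤ C) :
    |∫ τ in (0 : ℝ)..t, exp (-κ * (t - τ)) * h τ| ≤ C / κ := by
  have hC0 : 0 ≤ C := (abs_nonneg _).trans (hC 0 ⟨le_rfl, ht⟩)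
  calc |∫ τ in (0 : ℝ)..t, exp (-κ * (t - τ)) * h τ|
      ≤ ∫ τ in (0 : ℝ)..t, exp (-κ * (t - τ)) * C := by
        rw [← norm_eq_abs]
        have hbound : Continuous fun τ => exp (-κ * (t - τ)) * C := by fun_prop
        refine norm_integral_le_of_norm_le ht (Filter.Eventually.of_forall fun τ hτ => ?_)
          (hbound.intervalIntegrable (μ := volume) _ _)
        rw [norm_eq_abs, abs_mul, abs_of_pos (exp_pos _)]
        exact mul_le_mul_of_nonneg_left (hC τ (Set.Ioc_subset_Icc_self hτ)) (exp_pos _).le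
    _ ≤ κ⁻¹ * C := by
        rw [integral_mul_const]
        exact mul_le_mul_of_nonneg_right (integral_exp_neg_mul_sub_le_inv t hκ) hC0
    _ = C / κ := by ring

theorem gating_operator_contraction_general
    {E : Type*} (T κ M₂ : ℝ) (hκ : 0 < κ) (hM₂ : 0 < M₂)
    (w₀ : E → ℝ)
    (gs : ℝ → ℝ → ℝ → ℝ)
    (hgscont : Continuous fun p : ℝ × ℝ × ℝ => gs p.1 p.2.1 p.2.2)
    (hgsLip : ∀ t v w v' w' : ℝ,
      |gs t v w - gs t v' w'| ≤ M₂ * (|v - v'| + |w - w'|))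
    (v w v' w' : E → ℝ → ℝ)
    (hv : ∀ x, Continuous (v x)) (hw : ∀ x, Continuous (w x))
    (hv' : ∀ x, Continuous (v' x)) (hw' : ∀ x, Continuous (w' x))
    (Kv Kw : ℝ)
    (hKv : ∀ x, ∀ t ∈ Set.Icc (0 : ℝ) T, |v x t - v' x t| ≤ Kv)
    (hKw : ∀ x, ∀ t ∈ Set.Icc (0 : ℝ) T, |w x t - w' x t| ≤ Kw) :
    ∀ x, ∀ t ∈ Set.Icc (0 : ℝ) T,
      |(Real.exp (-κ * t) * w₀ x
          + ∫ τ in (0 : ℝ)..t, Real.exp (-κ * (t - τ)) * gs τ (v x τ) (w x τ))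
        - (Real.exp (-κ * t) * w₀ x
          + ∫ τ in (0 : ℝ)..t, Real.exp (-κ * (t - τ)) * gs τ (v' x τ) (w' x τ))|
      ≤ (M₂ / κ) * (Kv + Kw) := by
  intro x t ⟨ht0, htT⟩
  have hint (a b : ℝ → ℝ) (ha : Continuous a) (hb : Continuous b) :
      IntervalIntegrable (fun τ => exp (-κ * (t - τ)) * gs τ (a τ) (b τ)) volume 0 t :=
    ((by fun_prop : Continuous fun τ => exp (-κ * (t - τ))).mul
      (hgscont.comp (continuous_id.prodMk (ha.prodMk hb)))).intervalIntegrable _ _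
  rw [add_sub_add_left_eq_sub, ← integral_sub (hint _ _ (hv x) (hw x)) (hint _ _ (hv' x) (hw' x)),
    mul_comm_div, ← mul_div_assoc]
  simp_rw [← mul_sub]
  refine abs_integral_exp_neg_mul_sub_mul_le hκ ht0 fun τ ⟨hτ0, hτt⟩ => ?_
  have hτ : τ ∈ Set.Icc 0 T := ⟨hτ0, hτt.trans htT⟩
  exact (hgsLip _ _ _ _ _).trans
    (mul_le_mul_of_nonneg_left (add_le_add (hKv x τ hτ) (hKw x τ hτ)) hM₂.le)

/-- **Contraction estimate for the gating solution operator.**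
Let `G(v,w)(x,t) = e^{-κt} w₀(x) + ∫₀ᵗ e^{-κ(t-τ)} g*(τ, v(x,τ), w(x,τ)) dτ` be the
variation-of-constants solution operator of `∂ₜw + κw = g*(t,v,w)`, `w(·,0) = w₀`,
where `g*` is `M₂`-Lipschitz in `(v,w)` uniformly in `t`.  Then for bounded
continuous `v, w, v', w'`, with pointwise bounds `|v - v'| ≤ Kv` and `|w - w'| ≤ Kw`
on `E × [0,T]` (so that the suprema of `|v-v'|`, `|w-w'|` are at most `Kv`, `Kw`),
the difference of the images is bounded by `(M₂/κ)(Kv + Kw)` on `E × [0,T]`. -/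
theorem gating_operator_contraction
    {E : Type*} (T κ M₂ : ℝ) (hT : 0 < T) (hκ : 0 < κ) (hM₂ : 0 < M₂)
    (w₀ : E → ℝ) (B : ℝ) (hw₀ : ∀ x, |w₀ x| ≤ B)
    (gs : ℝ → ℝ → ℝ → ℝ)
    (hgscont : Continuous fun p : ℝ × ℝ × ℝ => gs p.1 p.2.1 p.2.2)
    (hgsLip : ∀ t v w v' w' : ℝ,
      |gs t v w - gs t v' w'| ≤ M₂ * (|v - v'| + |w - w'|))
    (v w v' w' : E → ℝ → ℝ)
    (hv : ∀ x, Continuous (v x)) (hw : ∀ x, Continuous (w x))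
    (hv' : ∀ x, Continuous (v' x)) (hw' : ∀ x, Continuous (w' x))
    (Bv : ℝ) (hbv : ∀ x t, |v x t| + |w x t| + |v' x t| + |w' x t| ≤ Bv)
    (Kv Kw : ℝ)
    (hKv : ∀ x, ∀ t ∈ Set.Icc (0 : ℝ) T, |v x t - v' x t| ≤ Kv)
    (hKw : ∀ x, ∀ t ∈ Set.Icc (0 : ℝ) T, |w x t - w' x t| ≤ Kw) :
    ∀ x, ∀ t ∈ Set.Icc (0 : ℝ) T,
      |(Real.exp (-κ * t) * w₀ x
          + ∫ τ in (0 : ℝ)..t, Real.exp (-κ * (t - τ)) * gs τ (v x τ) (w x τ))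
        - (Real.exp (-κ * t) * w₀ x
          + ∫ τ in (0 : ℝ)..t, Real.exp (-κ * (t - τ)) * gs τ (v' x τ) (w' x τ))|
      ≤ (M₂ / κ) * (Kv + Kw) :=
  gating_operator_contraction_general T κ M₂ hκ hM₂ w₀ gs hgscont hgsLip v w v' w' hv hw hv' hw' Kv
    Kw hKv hKw
end
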